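/- arXiv:math/0406560 — 4 statements merged into one kernel-verified Lean document; each statement's English description precedes it below -/
import Mathlib

section
/- Let a_n, b_n be sequences with a_n/n → α and b_n/n → β. Then γ_n := 2^{-a_n-b_n}/(2n+a_n+b_n) · Γ(n+1)Γ(n+a_n+b_n+1)/(Γ(n+a_n)Γ(n+b_n)) satisfies γ_n = n · 2^{-a_n-b_n}(1+α_n+β_n)^{n+a_n+b_n+1/2} / ((1+α_n)^{n+a_n-1/2}(1+β_n)^{n+b_n-1/2}(2+α_n+β_n)) · (1+O(1/n)), where α_n=a_n/n, β_n=b_n/n. -/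
/- STATEMENT 9: If a_n/n → α and b_n/n → β, then
γ_n := 2^{-a_n-b_n}/(2n+a_n+b_n) · Γ(n+1)Γ(n+a_n+b_n+1)/(Γ(n+a_n)Γ(n+b_n))
satisfies
γ_n = n · 2^{-a_n-b_n}(1+α_n+β_n)^{n+a_n+b_n+1/2}
      / ((1+α_n)^{n+a_n-1/2}(1+β_n)^{n+b_n-1/2}(2+α_n+β_n)) · (1+O(1/n)),
where α_n = a_n/n, β_n = b_n/n. -/

noncomputable def jacobiGammaSeq (a b : ℕ → ℝ) (n : ℕ) : ℝ :=
  (2 : ℝ) ^ (-(a n) - b n) / (2 * (n : ℝ) + a n + b n) *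
    (Real.Gamma ((n : ℝ) + 1) * Real.Gamma ((n : ℝ) + a n + b n + 1) /
      (Real.Gamma ((n : ℝ) + a n) * Real.Gamma ((n : ℝ) + b n)))

/-- The equivalent of `γ_n` given by Stirling's formula. -/
noncomputable def jacobiGammaApprox (a b : ℕ → ℝ) (n : ℕ) : ℝ :=
  (n : ℝ) * (2 : ℝ) ^ (-(a n) - b n) *
      (1 + a n / n + b n / n) ^ ((n : ℝ) + a n + b n + 1 / 2) /
    ((1 + a n / n) ^ ((n : ℝ) + a n - 1 / 2) * (1 + b n / n) ^ ((n : ℝ) + b n - 1 / 2) *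
      (2 + a n / n + b n / n))

/-! Let `μ x = log Γ x - (x - 1/2) log x + x` (Binet's function up to a constant). The quotient
of `γ_n` by its Stirling equivalent is exactly `exp (μ n + μ (n + a_n + b_n) - μ (n + a_n) -
μ (n + b_n))`, so it suffices that `μ` varies by `O(1/x)` on `[x, ∞)`. Along integer steps this
is Robbins' bound `0 ≤ μ x - μ (x + 1) ≤ 1 / (12 x (x + 1))`, read off the series of
`(x + 1/2) log (1 + 1/x)`; within a unit step it follows from the log-convexity of `Γ`. -/

open Real

theorem log_Gamma_add_one {x : ℝ} (hx : 0 < x) :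
    log (Gamma (x + 1)) = log (Gamma x) + log x := by
  rw [Gamma_add_one hx.ne', log_mul hx.ne' (Gamma_pos_of_pos hx).ne', add_comm]

noncomputable def stirlingRemainder (x : ℝ) : ℝ :=
  log (Gamma x) - (x - 1 / 2) * log x + x

theorem stirlingRemainder_sub_add_one {x : ℝ} (hx : 0 < x) :
    stirlingRemainder x - stirlingRemainder (x + 1) = (x + 1 / 2) * log (1 + x⁻¹) - 1 := by
  have h : 1 + x⁻¹ = (x + 1) / x := by field_simp
  rw [stirlingRemainder, stirlingRemainder, log_Gamma_add_one hx, h,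
    log_div (by positivity) hx.ne']
  ring

theorem hasSum_stirlingRemainder_sub_add_one {x : ℝ} (hx : 0 < x) :
    HasSum (fun k : ℕ => ((1 / (2 * x + 1)) ^ 2) ^ (k + 1) / (2 * (k + 1 : ℕ) + 1))
      (stirlingRemainder x - stirlingRemainder (x + 1)) := by
  rw [stirlingRemainder_sub_add_one hx]
  have h := (hasSum_log_one_add_inv hx).mul_left (x + 1 / 2)
  rw [← hasSum_nat_add_iff' 1, Finset.sum_range_one] at h
  have hterm : (fun k : ℕ => (x + 1 / 2) * (2 * (1 / (2 * ((k + 1 : ℕ) : ℝ) + 1)) *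
      (1 / (2 * x + 1)) ^ (2 * (k + 1) + 1))) =
      fun k : ℕ => ((1 / (2 * x + 1)) ^ 2) ^ (k + 1) / (2 * (k + 1 : ℕ) + 1) := by
    funext k
    rw [← pow_mul, pow_succ _ (2 * (k + 1))]
    field_simp
  have hfirst :
      (x + 1 / 2) * (2 * (1 / (2 * ((0 : ℕ) : ℝ) + 1)) * (1 / (2 * x + 1)) ^ (2 * 0 + 1)) =
        1 := by
    norm_num
    field_simp
  rwa [hterm, hfirst] at h

theorem stirlingRemainder_sub_add_one_nonneg {x : ℝ} (hx : 0 < x) :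
    0 ≤ stirlingRemainder x - stirlingRemainder (x + 1) :=
  (hasSum_stirlingRemainder_sub_add_one hx).nonneg fun _ => by positivity

theorem stirlingRemainder_sub_add_one_le {x : ℝ} (hx : 0 < x) :
    stirlingRemainder x - stirlingRemainder (x + 1) ≤ 1 / (12 * x) - 1 / (12 * (x + 1)) := by
  set r := (1 / (2 * x + 1)) ^ 2 with hr
  have hr0 : 0 ≤ r := by positivity
  have hr1 : r < 1 := by
    rw [hr, div_pow, one_pow, div_lt_one (by positivity)]
    nlinarith
  have hgeom := ((hasSum_geometric_of_lt_one hr0 hr1).mul_right r).div_const 3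
  have h1r : 1 - r = 4 * x * (x + 1) / (2 * x + 1) ^ 2 := by
    rw [hr]
    field_simp
    ring
  have hsum : (1 - r)⁻¹ * r / 3 = 1 / (12 * x) - 1 / (12 * (x + 1)) := by
    rw [h1r, hr]
    field_simp
    ring
  rw [← hsum]
  refine hasSum_le (fun k => ?_) (hasSum_stirlingRemainder_sub_add_one hx) hgeom
  rw [← pow_succ]
  gcongr
  push_cast
  linarith [(Nat.cast_nonneg k : (0 : ℝ) ≤ k)]

theorem abs_stirlingRemainder_add_nat_sub_le {x : ℝ} (hx : 0 < x) (m : ℕ) :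
    |stirlingRemainder (x + m) - stirlingRemainder x| ≤ 1 / (12 * x) := by
  set g : ℕ → ℝ := fun k => 1 / (12 * (x + k))
  have hstep : ∀ {k : ℕ}, k < m →
      dist (stirlingRemainder (x + k)) (stirlingRemainder (x + (k + 1 : ℕ))) ≤
        g k - g (k + 1) := by
    intro k _
    have hxk : 0 < x + k := by positivity
    rw [Real.dist_eq, Nat.cast_succ, ← add_assoc,
      abs_of_nonneg (stirlingRemainder_sub_add_one_nonneg hxk)]
    simpa only [g, Nat.cast_succ, add_assoc] using stirlingRemainder_sub_add_one_le hxk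
  have h := dist_le_range_sum_of_dist_le (f := fun k : ℕ => stirlingRemainder (x + k)) m hstep
  rw [Finset.sum_range_sub', dist_comm, Real.dist_eq] at h
  simp only [Nat.cast_zero, add_zero, g] at h
  have : 0 ≤ 1 / (12 * (x + m)) := by positivity
  linarith

theorem log_Gamma_sub_le_mul_log {x y : ℝ} (hx : 0 < x) (hxy : x ≤ y) (hyx : y ≤ x + 1) :
    log (Gamma y) - log (Gamma x) ≤ (y - x) * log x := by
  have h := convexOn_log_Gamma.2 (Set.mem_Ioi.2 hx) (Set.mem_Ioi.2 (by linarith : 0 < x + 1))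
    (by linarith : 0 ≤ 1 - (y - x)) (by linarith : 0 ≤ y - x) (by ring)
  simp only [smul_eq_mul, Function.comp_apply, log_Gamma_add_one hx] at h
  rw [show (1 - (y - x)) * x + (y - x) * (x + 1) = y by ring] at h
  linarith

theorem abs_stirlingRemainder_sub_le_of_le_add_one {x y : ℝ} (hx : 0 < x) (hxy : x ≤ y)
    (hyx : y ≤ x + 1) : |stirlingRemainder y - stirlingRemainder x| ≤ 1 / (2 * x) := by
  have hy : 0 < y := hx.trans_le hxy
  set L := log y - log x with hL
  have hL_le : x * L ≤ y - x := by
    have := log_le_sub_one_of_pos (div_pos hy hx)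
    rw [log_div hy.ne' hx.ne', ← hL, div_sub_one hx.ne', le_div_iff₀ hx] at this
    linarith
  have hL_ge : y - x ≤ y * L := by
    have := one_sub_inv_le_log_of_pos (div_pos hy hx)
    rw [log_div hy.ne' hx.ne', ← hL, inv_div, one_sub_div hy.ne', div_le_iff₀ hy] at this
    linarith
  have hupper := log_Gamma_sub_le_mul_log hx hxy hyx
  have hlower := log_Gamma_sub_le_mul_log hy (by linarith : y ≤ x + 1) (by linarith)
  rw [log_Gamma_add_one hx] at hlower
  have hL_half : L / 2 ≤ 1 / (2 * x) := by
    rw [div_le_div_iff₀ two_pos (by positivity)]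
    linarith
  have hsplit_upper : stirlingRemainder y - stirlingRemainder x =
      (log (Gamma y) - log (Gamma x) - (y - x) * log x) + (y - x - y * L) + L / 2 := by
    rw [hL, stirlingRemainder, stirlingRemainder]
    ring
  have hsplit_lower : stirlingRemainder y - stirlingRemainder x =
      (log (Gamma y) - log (Gamma x) - log x + (x + 1 - y) * log y) + (y - x - x * L) -
        L / 2 := by
    rw [hL, stirlingRemainder, stirlingRemainder]
    ring
  rw [abs_le]
  constructor <;> linarith

theorem abs_stirlingRemainder_sub_le {x y : ℝ} (hx : 0 < x) (hxy : x ≤ y) :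
    |stirlingRemainder y - stirlingRemainder x| ≤ 1 / x := by
  set m := ⌊y - x⌋₊
  have hm_le : (m : ℝ) ≤ y - x := Nat.floor_le (by linarith)
  have hm_gt : y - x < m + 1 := Nat.lt_floor_add_one _
  have hxm : 0 < x + m := by positivity
  have hfrac := abs_stirlingRemainder_sub_le_of_le_add_one hxm (by linarith) (by linarith)
  have hint := abs_stirlingRemainder_add_nat_sub_le hx m
  have hmono : 1 / (2 * (x + m)) ≤ 1 / (2 * x) := by gcongr; linarith [m.cast_nonneg (α := ℝ)]
  calc |stirlingRemainder y - stirlingRemainder x|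
      ≤ |stirlingRemainder y - stirlingRemainder (x + m)| +
          |stirlingRemainder (x + m) - stirlingRemainder x| := abs_sub_le _ _ _
    _ ≤ 1 / (2 * x) + 1 / (12 * x) := add_le_add (hfrac.trans hmono) hint
    _ ≤ 1 / x := by
      rw [div_add_div _ _ (by positivity) (by positivity), div_le_div_iff₀ (by positivity) hx]
      nlinarith

theorem jacobiGammaSeq_div_jacobiGammaApprox {a b : ℕ → ℝ} {n : ℕ} (hn : 0 < n)
    (ha : 0 ≤ a n) (hb : 0 ≤ b n) :
    jacobiGammaSeq a b n / jacobiGammaApprox a b n =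
      exp (stirlingRemainder n + stirlingRemainder (n + a n + b n) -
        stirlingRemainder (n + a n) - stirlingRemainder (n + b n)) := by
  have hx : (0 : ℝ) < n := Nat.cast_pos.2 hn
  have hseq : 0 < jacobiGammaSeq a b n := by unfold jacobiGammaSeq; positivity
  have happrox : 0 < jacobiGammaApprox a b n := by unfold jacobiGammaApprox; positivity
  rw [← exp_log (div_pos hseq happrox), log_div hseq.ne' happrox.ne']
  congr 1
  have h1 : 1 + a n / n + b n / n = (n + a n + b n) / n := by field_simp
  have h2 : 1 + a n / n = (n + a n) / n := by field_simp
  have h3 : 1 + b n / n = (n + b n) / n := by field_simp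
  have h4 : 2 + a n / n + b n / n = (2 * n + a n + b n) / n := by field_simp
  have hxab : (0 : ℝ) < n + a n + b n := by positivity
  rw [jacobiGammaSeq, jacobiGammaApprox, h1, h2, h3, h4]
  simp (disch := positivity) only [log_mul, log_div, log_rpow]
  rw [log_Gamma_add_one hx, log_Gamma_add_one hxab]
  simp only [stirlingRemainder]
  ring

theorem abs_stirlingRemainder_second_difference_le {x p q : ℝ} (hx : 0 < x) (hp : 0 ≤ p)
    (hq : 0 ≤ q) :
    |stirlingRemainder x + stirlingRemainder (x + p + q) - stirlingRemainder (x + p) -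
      stirlingRemainder (x + q)| ≤ 3 / x := by
  have hpq := abs_le.1 (abs_stirlingRemainder_sub_le hx (by linarith : x ≤ x + p + q))
  have hp' := abs_le.1 (abs_stirlingRemainder_sub_le hx (by linarith : x ≤ x + p))
  have hq' := abs_le.1 (abs_stirlingRemainder_sub_le hx (by linarith : x ≤ x + q))
  rw [abs_le, show 3 / x = 1 / x + 1 / x + 1 / x by ring]
  constructor <;> linarith [hpq.1, hpq.2, hp'.1, hp'.2, hq'.1, hq'.2]

theorem jacobiGamma_stirling_general (a b : ℕ → ℝ)
    (ha0 : ∀ n, 0 ≤ a n) (hb0 : ∀ n, 0 ≤ b n) :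
    ∃ C > (0 : ℝ), ∃ N : ℕ, ∀ n ≥ N,
      |jacobiGammaSeq a b n / jacobiGammaApprox a b n - 1| ≤ C / n := by
  refine ⟨6, by norm_num, 3, fun n hn => ?_⟩
  have hx : (3 : ℝ) ≤ n := by exact_mod_cast hn
  rw [jacobiGammaSeq_div_jacobiGammaApprox (by omega) (ha0 n) (hb0 n)]
  have hM := abs_stirlingRemainder_second_difference_le (by linarith) (ha0 n) (hb0 n)
  have hM_le_one : 3 / (n : ℝ) ≤ 1 := by rw [div_le_one (by linarith)]; exact hx
  calc _ ≤ 2 * (3 / (n : ℝ)) := (abs_exp_sub_one_le (hM.trans hM_le_one)).trans (by linarith)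
    _ = 6 / n := by ring

theorem jacobiGamma_stirling (a b : ℕ → ℝ) (α β : ℝ)
    (ha0 : ∀ n, 0 ≤ a n) (hb0 : ∀ n, 0 ≤ b n)
    (hα : Filter.Tendsto (fun n => a n / n) Filter.atTop (nhds α))
    (hβ : Filter.Tendsto (fun n => b n / n) Filter.atTop (nhds β))
    (hα0 : 0 ≤ α) (hβ0 : 0 ≤ β) :
    ∃ C > (0 : ℝ), ∃ N : ℕ, ∀ n ≥ N,
      |jacobiGammaSeq a b n / jacobiGammaApprox a b n - 1| ≤ C / n :=
  jacobiGamma_stirling_general a b ha0 hb0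
end

section
/- Let F_n : ℂ×ℂ → ℂ be a sequence of functions, each holomorphic in both variables, converging uniformly on compact subsets of ℂ² minus the diagonal {(x,x) : x ∈ ℂ} to a function F. Then F extends by continuity to a holomorphic function on all of ℂ², and the convergence F_n → F holds uniformly on all compact subsets of ℂ². -/
/-!
For fixed `x`, the difference `F m (x, ·) - F n (x, ·)` is entire, so by the maximum modulus
principle its size on the disc `|y - x| ≤ R` is controlled by its size on the circle
`|y - x| = R`, which lies off the diagonal. Hence the sequence is uniformly Cauchy on every
compact subset of `ℂ²`. The Cauchy estimate along complex lines then makes the derivatives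
uniformly Cauchy on balls as well, and a locally uniform limit whose derivatives also converge
locally uniformly is differentiable.
-/

open Metric Filter Set Topology

section

variable {ι α β E F G H : Type*}
  [NormedAddCommGroup E] [NormedSpace ℂ E] [NormedAddCommGroup F] [NormedSpace ℂ F]
  [SeminormedAddCommGroup G] [SeminormedAddCommGroup H] {l : Filter ι}

theorem UniformCauchySeqOn.of_norm_sub_le {f : ι → α → G} {g : ι → β → H} {s : Set β}
    {t : Set α} {C : ℝ} (hC : 0 < C) (hf : UniformCauchySeqOn f l t)
    (hfg : ∀ i j ε, (∀ y ∈ t, ‖f i y - f j y‖ ≤ ε) → ∀ x ∈ s, ‖g i x - g j x‖ ≤ C * ε) :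
    UniformCauchySeqOn g l s := by
  intro u hu
  obtain ⟨ε, hε, hεu⟩ := Metric.mem_uniformity_dist.1 hu
  filter_upwards [hf _ (dist_mem_uniformity (div_pos hε (mul_pos two_pos hC)))] with ij hij x hx
  refine hεu ?_
  rw [dist_eq_norm]
  calc ‖g ij.1 x - g ij.2 x‖ ≤ C * (ε / (2 * C)) :=
        hfg _ _ _ (fun y hy => by simpa only [dist_eq_norm] using (hij y hy).le) x hx
    _ < ε := by field_simp; linarith

theorem norm_fderiv_le_of_forall_mem_closedBall_norm_le {f : E → F} (hf : Differentiable ℂ f)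
    {z : E} {r C : ℝ} (hr : 0 < r) (hC : ∀ w ∈ closedBall z r, ‖f w‖ ≤ C) :
    ‖fderiv ℂ f z‖ ≤ C / r := by
  have hC0 : 0 ≤ C := (norm_nonneg _).trans (hC z (mem_closedBall_self hr.le))
  refine ContinuousLinearMap.opNorm_le_bound _ (by positivity) fun v => ?_
  rcases eq_or_ne v 0 with rfl | hv
  · simp
  have hv' : 0 < ‖v‖ := norm_pos_iff.2 hv
  have hline : HasDerivAt (fun t : ℂ => z + t • v) v 0 := by
    simpa using ((hasDerivAt_id (0 : ℂ)).smul_const v).const_add z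
  have hsphere : ∀ t ∈ sphere (0 : ℂ) (r / ‖v‖), ‖f (z + t • v)‖ ≤ C := by
    intro t ht
    apply hC
    rw [mem_closedBall, dist_self_add_left, norm_smul, mem_sphere_zero_iff_norm.1 ht,
      div_mul_cancel₀ _ hv'.ne']
  have := Complex.norm_deriv_le_of_forall_mem_sphere_norm_le (div_pos hr hv')
    (hf.comp (by fun_prop)).diffContOnCl hsphere
  rw [((hf z).hasFDerivAt.comp_hasDerivAt_of_eq 0 hline (by simp)).deriv] at this
  calc _ ≤ C / (r / ‖v‖) := this
    _ = C / r * ‖v‖ := by field_simp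

theorem UniformCauchySeqOn.fderiv {f : ι → E → F} (hf : ∀ i, Differentiable ℂ (f i)) {c : E}
    {r δ : ℝ} (hδ : 0 < δ) (hcau : UniformCauchySeqOn f l (closedBall c (r + δ))) :
    UniformCauchySeqOn (fun i => fderiv ℂ (f i)) l (closedBall c r) :=
  hcau.of_norm_sub_le (inv_pos.2 hδ) fun i j ε hε z hz => by
    rw [← fderiv_sub (hf i z) (hf j z), inv_mul_eq_div]
    refine norm_fderiv_le_of_forall_mem_closedBall_norm_le ((hf i).sub (hf j)) hδ
      fun w hw => hε w (closedBall_subset_closedBall' ?_ hw)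
    linarith [mem_closedBall.1 hz]

theorem differentiable_of_uniformCauchySeqOn_closedBall [CompleteSpace F] [l.NeBot]
    {f : ι → E → F} {g : E → F} (hf : ∀ i, Differentiable ℂ (f i))
    (hcau : ∀ c r, UniformCauchySeqOn f l (closedBall c r))
    (hlim : ∀ x, Tendsto (fun i => f i x) l (𝓝 (g x))) : Differentiable ℂ g := by
  intro c
  have hcau_fderiv : UniformCauchySeqOn (fun i => fderiv ℂ (f i)) l (closedBall c 1) :=
    (hcau c (1 + 1)).fderiv hf one_pos
  have hlim_fderiv : ∀ x ∈ closedBall c 1, ∃ L, Tendsto (fun i => fderiv ℂ (f i) x) l (𝓝 L) :=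
    fun x hx => cauchy_map_iff_exists_tendsto.1 (hcau_fderiv.cauchy_map hx)
  choose! g' hg' using hlim_fderiv
  refine (hasFDerivAt_of_tendstoUniformlyOn isOpen_ball
    ((hcau_fderiv.tendstoUniformlyOn_of_tendsto hg').mono ball_subset_closedBall)
    (fun i x _ => (hf i x).hasFDerivAt) (fun x _ => hlim x) ?_).differentiableAt
  exact mem_ball_self one_pos

end

section

variable {ι F : Type*} [NormedAddCommGroup F] [NormedSpace ℂ F] {l : Filter ι}

theorem Complex.norm_le_of_mem_closedBall_of_forall_mem_sphere_norm_le {g : ℂ → F}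
    (hg : Differentiable ℂ g) {x y : ℂ} {R C : ℝ} (hR : 0 < R) (hy : y ∈ closedBall x R)
    (hC : ∀ w ∈ sphere x R, ‖g w‖ ≤ C) : ‖g y‖ ≤ C :=
  Complex.norm_le_of_forall_mem_frontier_norm_le isBounded_ball hg.diffContOnCl
    (frontier_ball x hR.ne' ▸ hC) (closure_ball x hR.ne' ▸ hy)

def verticalCircles (K : Set (ℂ × ℂ)) (R : ℝ) : Set (ℂ × ℂ) :=
  (fun p : ℂ × ℂ => (p.1, p.1 + p.2)) '' ((Prod.fst '' K) ×ˢ sphere 0 R)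

theorem IsCompact.verticalCircles {K : Set (ℂ × ℂ)} (hK : IsCompact K) (R : ℝ) :
    IsCompact (verticalCircles K R) :=
  ((hK.image continuous_fst).prod (isCompact_sphere 0 R)).image (by fun_prop)

theorem mem_verticalCircles {K : Set (ℂ × ℂ)} {R : ℝ} {z : ℂ × ℂ} (hz : z ∈ K) {w : ℂ}
    (hw : w ∈ sphere z.1 R) : (z.1, w) ∈ verticalCircles K R :=
  ⟨(z.1, w - z.1), ⟨⟨z, hz, rfl⟩, by simpa [← dist_eq_norm] using hw⟩, by simp⟩

theorem verticalCircles_subset_offDiagonal (K : Set (ℂ × ℂ)) {R : ℝ} (hR : 0 < R) :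
    verticalCircles K R ⊆ {z | z.1 ≠ z.2} := by
  rintro _ ⟨⟨x, w⟩, ⟨-, hw⟩, rfl⟩
  simpa using ne_of_mem_sphere hw hR.ne'

theorem uniformCauchySeqOn_of_forall_offDiagonal {f : ι → ℂ × ℂ → F}
    (hf : ∀ i, Differentiable ℂ (f i))
    (hcau : ∀ K ⊆ {z : ℂ × ℂ | z.1 ≠ z.2}, IsCompact K → UniformCauchySeqOn f l K)
    {K : Set (ℂ × ℂ)} (hK : IsCompact K) : UniformCauchySeqOn f l K := by
  obtain ⟨R, hR, hRK⟩ :=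
    (hK.image (continuous_snd.sub continuous_fst)).isBounded.exists_pos_norm_le
  refine (hcau _ (verticalCircles_subset_offDiagonal K hR) (hK.verticalCircles R)).of_norm_sub_le
    one_pos fun i j ε hε z hz => ?_
  rw [one_mul]
  exact Complex.norm_le_of_mem_closedBall_of_forall_mem_sphere_norm_le
    (g := fun w => f i (z.1, w) - f j (z.1, w)) (by fun_prop) hR
    (by simpa [dist_eq_norm] using hRK _ (mem_image_of_mem _ hz))
    fun w hw => hε _ (mem_verticalCircles hz hw)

end

theorem holomorphic_extension_off_diagonal
    (F : ℕ → ℂ × ℂ → ℂ) (G : ℂ × ℂ → ℂ)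
    (hF : ∀ m, Differentiable ℂ (F m))
    (hconv : ∀ K : Set (ℂ × ℂ), K ⊆ {z : ℂ × ℂ | z.1 ≠ z.2} → IsCompact K →
      TendstoUniformlyOn F G Filter.atTop K) :
    ∃ G' : ℂ × ℂ → ℂ, Differentiable ℂ G' ∧
      (∀ z : ℂ × ℂ, z.1 ≠ z.2 → G' z = G z) ∧
      ∀ K : Set (ℂ × ℂ), IsCompact K → TendstoUniformlyOn F G' Filter.atTop K := by
  have hcau : ∀ K, IsCompact K → UniformCauchySeqOn F atTop K :=
    fun K => uniformCauchySeqOn_of_forall_offDiagonal hF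
      fun K hK hKc => (hconv K hK hKc).uniformCauchySeqOn
  set G' : ℂ × ℂ → ℂ := fun z => limUnder atTop fun n => F n z
  have hlim : ∀ z, Tendsto (fun n => F n z) atTop (𝓝 (G' z)) := fun z =>
    ((hcau {z} isCompact_singleton).cauchySeq rfl).tendsto_limUnder
  refine ⟨G', differentiable_of_uniformCauchySeqOn_closedBall hF
      (fun c r => hcau _ (isCompact_closedBall c r)) hlim, fun z hz => ?_,
    fun K hK => (hcau K hK).tendstoUniformlyOn_of_tendsto fun z _ => hlim z⟩
  exact tendsto_nhds_unique (hlim z)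
    ((hconv {z} (singleton_subset_iff.2 hz) isCompact_singleton).tendsto_at rfl)
end

section
/- Let φ : [0,L] → ℝ (L ≥ 1) be a C² function, positive and decreasing on [0,L), with φ(L)=0, satisfying φ'' = χφ where χ is continuous, strictly positive on (0,L), χ(0)=0, and χ is uniformly close to the identity function on [0,1] (say |χ(x) - x| ≤ 1/10 on [0,1]). Then 1/800 < -φ'(0)/φ(0) < 2. -/
/-!
Everything follows from comparing `φ` and `φ'` with polynomials on `[0, 1]`.

Upper bound: there `χ ≤ 11/10` and `0 ≤ φ ≤ φ(0)`, so `φ'' ≤ (11/10) φ(0)`, and the Taylor bound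
at `x = 1` together with `φ(1) ≥ 0` gives `-φ'(0) ≤ (31/20) φ(0)`.

Lower bound: `φ'' = χ φ ≥ 0`, so `φ` lies above its tangent line at `0`. If `-φ'(0) ≤ φ(0)/800`,
this keeps `φ ≥ (799/800) φ(0)` on `[0, 1]`, hence `φ''(x) ≥ (799/800) φ(0) (x - 1/10)` there.
Integrating up to `9/10` forces `φ'(9/10) > 0`, contradicting that `φ` is decreasing.
-/

open Set

lemma image_le_of_hasDerivAt_le {f g f' g' : ℝ → ℝ} {a b : ℝ}
    (hf : ∀ x ∈ Icc a b, HasDerivAt f (f' x) x) (hg : ∀ x ∈ Icc a b, HasDerivAt g (g' x) x)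
    (ha : f a ≤ g a) (hle : ∀ x ∈ Ico a b, f' x ≤ g' x) : ∀ x ∈ Icc a b, f x ≤ g x :=
  image_le_of_deriv_right_le_deriv_boundary
    (fun x hx => (hf x hx).continuousAt.continuousWithinAt)
    (fun x hx => (hf x (Ico_subset_Icc_self hx)).hasDerivWithinAt) ha
    (fun x hx => (hg x hx).continuousAt.continuousWithinAt)
    (fun x hx => (hg x (Ico_subset_Icc_self hx)).hasDerivWithinAt) hle

lemma AntitoneOn.Icc_of_Ico {f : ℝ → ℝ} {a b : ℝ} (hab : a ≤ b) (hf : AntitoneOn f (Ico a b))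
    (hb : ∀ x ∈ Ico a b, f b ≤ f x) : AntitoneOn f (Icc a b) := by
  rw [← Ico_insert_right hab, antitoneOn_insert_iff]
  exact ⟨fun x hx _ => hb x hx, fun x hx hbx => absurd hx.2 hbx.not_gt, hf⟩

section Taylor

variable {f f' f'' : ℝ → ℝ} {a b : ℝ}

lemma image_le_taylor_of_second_deriv_le {M : ℝ}
    (hf : ∀ x ∈ Icc a b, HasDerivAt f (f' x) x) (hf' : ∀ x ∈ Icc a b, HasDerivAt f' (f'' x) x)
    (hM : ∀ x ∈ Ico a b, f'' x ≤ M) :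
    ∀ x ∈ Icc a b, f x ≤ f a + f' a * (x - a) + M / 2 * (x - a) ^ 2 := by
  have hline (x : ℝ) : HasDerivAt (fun y => f' a + M * (y - a)) M x := by
    simpa using ((hasDerivAt_id' x).sub_const a).const_mul M |>.const_add (f' a)
  have hquad (x : ℝ) : HasDerivAt (fun y => f a + f' a * (y - a) + M / 2 * (y - a) ^ 2)
      (f' a + M * (x - a)) x := by
    have hsub := (hasDerivAt_id' x).sub_const a
    have h := ((hsub.const_mul (f' a)).const_add (f a)).fun_add ((hsub.fun_pow 2).const_mul (M / 2))
    exact h.congr_deriv (by norm_num; ring)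
  have hf'_le := image_le_of_hasDerivAt_le hf' (fun x _ => hline x) (by simp) hM
  exact image_le_of_hasDerivAt_le hf (fun x _ => hquad x) (by simp)
    fun x hx => hf'_le x (Ico_subset_Icc_self hx)

lemma taylor_le_image_of_le_second_deriv {m : ℝ}
    (hf : ∀ x ∈ Icc a b, HasDerivAt f (f' x) x) (hf' : ∀ x ∈ Icc a b, HasDerivAt f' (f'' x) x)
    (hm : ∀ x ∈ Ico a b, m ≤ f'' x) :
    ∀ x ∈ Icc a b, f a + f' a * (x - a) + m / 2 * (x - a) ^ 2 ≤ f x := by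
  intro x hx
  have := image_le_taylor_of_second_deriv_le (f := fun x => -f x) (f' := fun x => -f' x)
    (M := -m) (fun x hx => (hf x hx).neg) (fun x hx => (hf' x hx).neg)
    (fun x hx => neg_le_neg (hm x hx)) x hx
  linarith

end Taylor

section AiryType

variable {f f' f'' χ : ℝ → ℝ}
  (hf : ∀ x ∈ Icc (0 : ℝ) 1, HasDerivAt f (f' x) x)
  (hf' : ∀ x ∈ Icc (0 : ℝ) 1, HasDerivAt f' (f'' x) x)
  (hode : ∀ x ∈ Icc (0 : ℝ) 1, f'' x = χ x * f x)
  (hχid : ∀ x ∈ Icc (0 : ℝ) 1, |χ x - x| ≤ 1 / 10)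
  (hf_nonneg : ∀ x ∈ Icc (0 : ℝ) 1, 0 ≤ f x)
include hf hf' hode hχid hf_nonneg

lemma neg_deriv_le_of_airy_type (hf_le : ∀ x ∈ Icc (0 : ℝ) 1, f x ≤ f 0) :
    -f' 0 ≤ 31 / 20 * f 0 := by
  have hf''_le : ∀ x ∈ Ico (0 : ℝ) 1, f'' x ≤ 11 / 10 * f 0 := by
    intro x hx
    have hx' := Ico_subset_Icc_self hx
    have hχ_le : χ x ≤ 11 / 10 := by linarith [(abs_le.mp (hχid x hx')).2, hx.2]
    rw [hode x hx']
    exact mul_le_mul hχ_le (hf_le x hx') (hf_nonneg x hx') (by norm_num)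
  have h1 := image_le_taylor_of_second_deriv_le hf hf' hf''_le 1 (right_mem_Icc.2 zero_le_one)
  linarith [hf_nonneg 1 (right_mem_Icc.2 zero_le_one)]

lemma lt_neg_deriv_of_airy_type (hχ_nonneg : ∀ x ∈ Ico (0 : ℝ) 1, 0 ≤ χ x) (hf0 : 0 < f 0)
    (hf'_nonpos : f' (9 / 10) ≤ 0) : f 0 / 800 < -f' 0 := by
  by_contra! hslope
  have hf''_nonneg : ∀ x ∈ Ico (0 : ℝ) 1, 0 ≤ f'' x := fun x hx => by
    rw [hode x (Ico_subset_Icc_self hx)]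
    exact mul_nonneg (hχ_nonneg x hx) (hf_nonneg x (Ico_subset_Icc_self hx))
  have hf_ge : ∀ x ∈ Icc (0 : ℝ) 1, 799 / 800 * f 0 ≤ f x := fun x hx => by
    have := taylor_le_image_of_le_second_deriv hf hf' hf''_nonneg x hx
    nlinarith [hx.1, hx.2]
  set c := 799 / 800 * f 0 with hc
  have hf''_ge : ∀ x ∈ Ico (0 : ℝ) 1, c * (x - 1 / 10) ≤ f'' x := by
    intro x hx
    have hx' := Ico_subset_Icc_self hx
    rcases le_total x (1 / 10) with hsmall | hlarge
    · nlinarith [hf''_nonneg x hx]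
    · have hχ_ge : x - 1 / 10 ≤ χ x := by linarith [(abs_le.mp (hχid x hx')).1]
      rw [hode x hx', mul_comm c]
      exact mul_le_mul hχ_ge (hf_ge x hx') (by positivity) (by linarith)
  have hparab (x : ℝ) : HasDerivAt (fun y => f' 0 + c / 2 * ((y - 1 / 10) ^ 2 - 1 / 100))
      (c * (x - 1 / 10)) x := by
    have h := (((hasDerivAt_id' x).sub_const (1 / 10)).fun_pow 2 |>.sub_const (1 / 100)
      |>.const_mul (c / 2)).const_add (f' 0)
    exact h.congr_deriv (by norm_num; ring)
  have := image_le_of_hasDerivAt_le (fun x _ => hparab x) hf' (by norm_num) hf''_ge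
    (9 / 10) ⟨by norm_num, by norm_num⟩
  linarith

end AiryType

theorem airy_type_log_derivative_bound_general
    (L : ℝ) (hL : 1 ≤ L) (φ χ : ℝ → ℝ)
    (hφ : ContDiff ℝ 2 φ)
    (hpos : ∀ x ∈ Set.Ico (0 : ℝ) L, 0 < φ x)
    (hanti : AntitoneOn φ (Set.Ico 0 L))
    (hL0 : φ L = 0)
    (hode : ∀ x ∈ Set.Icc (0 : ℝ) L, deriv (deriv φ) x = χ x * φ x)
    (hχpos : ∀ x ∈ Set.Ioo (0 : ℝ) L, 0 < χ x)
    (hχ0 : χ 0 = 0)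
    (hχid : ∀ x ∈ Set.Icc (0 : ℝ) 1, |χ x - x| ≤ 1 / 10) :
    1 / 800 < -(deriv φ 0) / φ 0 ∧ -(deriv φ 0) / φ 0 < 2 := by
  have hLpos : (0 : ℝ) < L := by linarith
  have hIcc : Icc (0 : ℝ) 1 ⊆ Icc 0 L := Icc_subset_Icc_right hL
  have hφ0 : 0 < φ 0 := hpos 0 ⟨le_rfl, hLpos⟩
  have hd : ∀ x ∈ Icc (0 : ℝ) 1, HasDerivAt φ (deriv φ x) x := fun x _ =>
    (hφ.differentiable (by norm_num) x).hasDerivAt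
  have hd' : ∀ x ∈ Icc (0 : ℝ) 1, HasDerivAt (deriv φ) (deriv (deriv φ) x) x := fun x _ =>
    ((hφ.iterate_deriv' 1 1).differentiable one_ne_zero x).hasDerivAt
  have hanti' : AntitoneOn φ (Icc 0 L) :=
    hanti.Icc_of_Ico hLpos.le fun x hx => hL0 ▸ (hpos x hx).le
  have hφ_nonneg : ∀ x ∈ Icc (0 : ℝ) 1, 0 ≤ φ x := fun x hx =>
    hL0 ▸ hanti' (hIcc hx) (right_mem_Icc.2 hLpos.le) (hx.2.trans hL)
  have hφ_le : ∀ x ∈ Icc (0 : ℝ) 1, φ x ≤ φ 0 := fun x hx =>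
    hanti' (left_mem_Icc.2 hLpos.le) (hIcc hx) hx.1
  have hχ_nonneg : ∀ x ∈ Ico (0 : ℝ) 1, 0 ≤ χ x := fun x hx =>
    hx.1.eq_or_lt.elim (fun h => h ▸ hχ0.ge) fun h => (hχpos x ⟨h, hx.2.trans_le hL⟩).le
  have hφ'_nonpos : deriv φ (9 / 10) ≤ 0 := by
    have hnhds : Ico 0 L ∈ nhds (9 / 10 : ℝ) := Ico_mem_nhds (by norm_num) (by linarith)
    rw [← derivWithin_of_mem_nhds hnhds]
    exact hanti.derivWithin_nonpos
  have hode' : ∀ x ∈ Icc (0 : ℝ) 1, deriv (deriv φ) x = χ x * φ x := fun x hx =>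
    hode x (hIcc hx)
  have hup := neg_deriv_le_of_airy_type hd hd' hode' hχid hφ_nonneg hφ_le
  have hlow := lt_neg_deriv_of_airy_type hd hd' hode' hχid hφ_nonneg hχ_nonneg hφ0 hφ'_nonpos
  constructor
  · rw [lt_div_iff₀ hφ0]; linarith
  · rw [div_lt_iff₀ hφ0]; linarith

theorem airy_type_log_derivative_bound
    (L : ℝ) (hL : 1 ≤ L) (φ χ : ℝ → ℝ)
    (hφ : ContDiff ℝ 2 φ)
    (hpos : ∀ x ∈ Set.Ico (0 : ℝ) L, 0 < φ x)
    (hanti : AntitoneOn φ (Set.Ico 0 L))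
    (hL0 : φ L = 0)
    (hode : ∀ x ∈ Set.Icc (0 : ℝ) L, deriv (deriv φ) x = χ x * φ x)
    (hχ : ContinuousOn χ (Set.Icc 0 L))
    (hχpos : ∀ x ∈ Set.Ioo (0 : ℝ) L, 0 < χ x)
    (hχ0 : χ 0 = 0)
    (hχid : ∀ x ∈ Set.Icc (0 : ℝ) 1, |χ x - x| ≤ 1 / 10) :
    1 / 800 < -(deriv φ 0) / φ 0 ∧ -(deriv φ 0) / φ 0 < 2 :=
  airy_type_log_derivative_bound_general L hL φ χ hφ hpos hanti hL0 hode hχpos hχ0 hχid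
end

section
/- For integers n ≥ 1 and k, l with 1 ≤ k,l ≤ n, the algebraic identity (-n)_k (n+c+1)_k (-n+1)_l (n+c)_l - (-n)_l (n+c+1)_l (-n+1)_k (n+c)_k = (-n)_l (n+c)_l (-n+1)_{k-1} (n+c+1)_{k-1} (l-k)(2n+c) holds for any real c, where (a)_m = a(a+1)···(a+m-1) denotes the Pochhammer symbol. -/
/- STATEMENT 17: For n ≥ 1 and 1 ≤ k,l ≤ n and any real c:
(-n)_k (n+c+1)_k (-n+1)_l (n+c)_l - (-n)_l (n+c+1)_l (-n+1)_k (n+c)_k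
 = (-n)_l (n+c)_l (-n+1)_{k-1} (n+c+1)_{k-1} (l-k)(2n+c),
where (a)_m is the Pochhammer symbol. -/

/-- The Pochhammer symbol `(a)_m = a(a+1)⋯(a+m-1)`. -/
noncomputable def poch (m : ℕ) (a : ℝ) : ℝ := (ascPochhammer ℝ m).eval a

theorem pochhammer_hard_edge_identity (n k l : ℕ) (hn : 1 ≤ n)
    (hk : 1 ≤ k) (hkn : k ≤ n) (hl : 1 ≤ l) (hln : l ≤ n) (c : ℝ) :
    poch k (-(n : ℝ)) * poch k ((n : ℝ) + c + 1) * poch l (-(n : ℝ) + 1) * poch l ((n : ℝ) + c)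
      - poch l (-(n : ℝ)) * poch l ((n : ℝ) + c + 1) * poch k (-(n : ℝ) + 1) *
          poch k ((n : ℝ) + c)
    = poch l (-(n : ℝ)) * poch l ((n : ℝ) + c) * poch (k - 1) (-(n : ℝ) + 1) *
        poch (k - 1) ((n : ℝ) + c + 1) * ((l : ℝ) - k) * (2 * (n : ℝ) + c) := by
  obtain ⟨k', rfl⟩ : ∃ k', k = k' + 1 := ⟨k - 1, (Nat.succ_pred_eq_of_pos hk).symm⟩
  obtain ⟨l', rfl⟩ : ∃ l', l = l' + 1 := ⟨l - 1, (Nat.succ_pred_eq_of_pos hl).symm⟩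
  have succ_right : ∀ (m : ℕ) (a : ℝ), poch (m + 1) a = poch m a * (a + m) := by
    intro m a
    simp [poch, ascPochhammer_succ_right, Polynomial.eval_mul]
  have succ_left : ∀ (m : ℕ) (a : ℝ), poch (m + 1) a = a * poch m (a + 1) := by
    intro m a
    simp [poch, ascPochhammer_succ_left, Polynomial.eval_comp]
  have h1 := succ_left k' (-(n : ℝ))
  have h2 := succ_right k' ((n : ℝ) + c + 1)
  have h3 := succ_right k' (-(n : ℝ) + 1)
  have h4 := succ_left k' ((n : ℝ) + c)
  have h5 := succ_left l' (-(n : ℝ))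
  have h6 := succ_right l' ((n : ℝ) + c + 1)
  have h7 := succ_right l' (-(n : ℝ) + 1)
  have h8 := succ_left l' ((n : ℝ) + c)
  simp only [Nat.add_sub_cancel]
  rw [h1, h2, h3, h4, h5, h6, h7, h8]
  push_cast
  ring
end
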